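/- Let I ⊂ S = K[x_1,…,x_n] be a monomial ideal and let O : u_1 < ⋯ < u_r be a degree-increasing order on G(I). Then there exists an order O_1 on the minimal monomial generators G(mI) of mI, each of the form f = x_j u_i, such that for every f = x_j u_i ∈ G(mI): λ_{mI, O_1, f} ≤ λ_{I, O, u_i}, and if λ_{I, O, u_i} > 0 then λ_{mI, O_1, f} < λ_{I, O, u_i}. In particular, if I has linear quotients with respect to O, then mI has linear quotients with respect to O_1. -/

import Mathlib

/-! # Framework: monomial ideals in `S = K[x_1,…,x_n]`

Monomials are encoded by their exponent vectors in `Fin n →₀ ℕ`; divisibility of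
monomials corresponds to the pointwise order, and `u : v = u / gcd(u,v)` corresponds
to truncated subtraction of exponent vectors. -/

open MvPolynomial

noncomputable section

/-- The graded maximal ideal `m = (x_1, …, x_n)` of `K[x_1,…,x_n]`. -/
def maxIdeal (n : ℕ) (K : Type) [Field K] : Ideal (MvPolynomial (Fin n) K) :=
  Ideal.span (Set.range X)

/-- Exponent vectors of monomials in `n` variables. -/
abbrev Expo (n : ℕ) := Fin n →₀ ℕ

/-- The monomial `x^s` with exponent vector `s`. -/
def mon (n : ℕ) (K : Type) [Field K] (s : Expo n) : MvPolynomial (Fin n) K :=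
  monomial s 1

/-- The degree of the monomial with exponent vector `s`. -/
def mdeg {n : ℕ} (s : Expo n) : ℕ := s.sum fun _ e => e

/-- `I` is a monomial ideal: it is generated by monomials. -/
def IsMonomialIdeal (n : ℕ) (K : Type) [Field K]
    (I : Ideal (MvPolynomial (Fin n) K)) : Prop :=
  ∃ A : Set (Expo n), I = Ideal.span (mon n K '' A)

/-- `G(I)`: the (exponent vectors of the) minimal monomial generators of `I`, i.e. the
monomials of `I` that are minimal with respect to divisibility. -/
def MinGens (n : ℕ) (K : Type) [Field K] (I : Ideal (MvPolynomial (Fin n) K)) :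
    Set (Expo n) :=
  {s | mon n K s ∈ I ∧ ∀ t : Expo n, mon n K t ∈ I → t ≤ s → t = s}

/-- Given an order `u_0 < u_1 < ⋯` on monomials, the colon ideal
`(u_0, …, u_{i-1}) : u_i`. -/
def colonPrev (n : ℕ) (K : Type) [Field K] {r : ℕ} (u : Fin r → Expo n) (i : Fin r) :
    Ideal (MvPolynomial (Fin n) K) :=
  Submodule.colon (Ideal.span (mon n K '' (u '' {l : Fin r | l < i})))
    (Ideal.span {mon n K (u i)})

/-- The ideal `J` is generated by (a set of) variables. -/
def genByVars (n : ℕ) (K : Type) [Field K] (J : Ideal (MvPolynomial (Fin n) K)) : Prop :=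
  ∃ T : Set (Fin n), J = Ideal.span ((fun p => (X p : MvPolynomial (Fin n) K)) '' T)

/-- `u` is an admissible order on `G(J)`: it enumerates the minimal monomial
generators, and each colon ideal `(u_0,…,u_{i-1}) : u_i` is generated by variables. -/
def IsLinQuotOrder (n : ℕ) (K : Type) [Field K] (J : Ideal (MvPolynomial (Fin n) K))
    {r : ℕ} (u : Fin r → Expo n) : Prop :=
  Function.Injective u ∧ Set.range u = MinGens n K J ∧
    ∀ i : Fin r, genByVars n K (colonPrev n K u i)

/-- `J` has linear quotients. -/
def HasLinearQuotients (n : ℕ) (K : Type) [Field K]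
    (J : Ideal (MvPolynomial (Fin n) K)) : Prop :=
  ∃ (r : ℕ) (u : Fin r → Expo n), IsLinQuotOrder n K J u

/-- The order `u` is degree increasing. -/
def DegIncr {n r : ℕ} (u : Fin r → Expo n) : Prop :=
  ∀ i i' : Fin r, i ≤ i' → mdeg (u i) ≤ mdeg (u i')

/-- The numerical invariant `λ_{I,O,u_i} = Σ_k (deg w_{i,k} - 1)`, where the `w_{i,k}`
are the minimal monomial generators of `(u_0,…,u_{i-1}) : u_i`. -/
def lamOrd (n : ℕ) (K : Type) [Field K] {r : ℕ} (u : Fin r → Expo n) (i : Fin r) : ℕ :=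
  ∑ᶠ w ∈ MinGens n K (colonPrev n K u i), (mdeg w - 1)

end

/-!
Order `G(mI)` blockwise, writing each `f` as `x_j u_i` with `i` least, and inside the block of
`u_i` put first the variables dividing a fixed minimal generator `w` of degree `≥ 2` of
`(u_1,…,u_{i-1}) : u_i`. Since `O` is degree increasing, the colon ideal of `f` is then
`((u_1,…,u_{i-1}) : u_i) : x_j` plus an ideal generated by variables. Dividing by `x_j` lowers
degrees by at most one, and distinct minimal generators of degree `≥ 2` of the new colon ideal
come from distinct minimal generators of the old one, so `λ` does not grow. It drops when
`λ_{I,O,u_i} > 0`: either `x_j ∣ w` and `w` loses a degree, or some `x_k ∣ w` precedes `x_j` in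
the block, so `x_k` lies in the new colon ideal and `w` is no longer a minimal generator.
-/

open Finsupp

namespace Finsupp

variable {σ : Type*}

theorem eq_of_le_of_degree_le {s t : σ →₀ ℕ} (h : s ≤ t) (hd : t.degree ≤ s.degree) :
    s = t := by
  have hsum : t.degree = s.degree + (t - s).degree := by
    rw [← map_add, add_tsub_cancel_of_le h]
  have : t - s = 0 := (degree_eq_zero_iff _).mp (by omega)
  rw [← add_tsub_cancel_of_le h, this, add_zero]

theorem degree_lt_degree {s t : σ →₀ ℕ} (h : s < t) : s.degree < t.degree :=
  lt_of_le_of_ne (degree_mono h.le) fun hd => h.ne (eq_of_le_of_degree_le h.le hd.ge)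

theorem degree_tsub_single_add_one {w : σ →₀ ℕ} {j : σ} (h : w j ≠ 0) :
    (w - single j 1).degree + 1 = w.degree := by
  have hle : single j 1 ≤ w := single_le_iff.mpr (by omega)
  rw [← tsub_add_cancel_of_le hle, map_add, degree_single, add_tsub_cancel_right]

theorem tsub_single_eq_self {w : σ →₀ ℕ} {j : σ} (h : w j = 0) :
    w - single j 1 = w := by
  classical
  ext k
  rw [tsub_apply, single_apply]
  split_ifs with hk
  · rw [← hk, h]
  · rfl

theorem add_single_tsub_add_single (a : σ →₀ ℕ) {k j : σ} (h : k ≠ j) :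
    (a + single k 1) - (a + single j 1) = single k 1 := by
  classical
  ext l
  simp only [tsub_apply, add_apply, single_apply]
  split_ifs with hk hj hj
  · exact absurd (hk.trans hj.symm) h
  all_goals omega

theorem add_single_tsub_le {a f : σ →₀ ℕ} {k : σ} (h : a k < f k) :
    (a + single k 1) - f ≤ a - f := by
  classical
  intro l
  simp only [tsub_apply, add_apply, single_apply]
  split_ifs with hk
  · subst hk; omega
  · simp

end Finsupp

theorem DegIncr.monotone {n r : ℕ} {u : Fin r → Expo n} (h : DegIncr u) :
    Monotone fun i => (u i).degree :=
  h

section MonomialIdeal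

variable {n : ℕ} {K : Type} [Field K]

theorem mon_add (s t : Expo n) : mon n K (s + t) = mon n K s * mon n K t := by
  simp [mon, monomial_mul]

theorem mon_mem_span_mon_iff {A : Set (Expo n)} {s : Expo n} :
    mon n K s ∈ Ideal.span (mon n K '' A) ↔ s ∈ upperClosure A := by
  classical
  rw [mem_upperClosure, mon, show mon n K '' A = (fun s => monomial s (1 : K)) '' A from rfl,
    mem_ideal_span_monomial_image]
  simp [support_monomial]

theorem span_mon_eq_of_upperClosure_eq {A B : Set (Expo n)}
    (h : upperClosure A = upperClosure B) :
    Ideal.span (mon n K '' A) = Ideal.span (mon n K '' B) := by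
  refine le_antisymm ?_ ?_ <;> rw [Ideal.span_le] <;> rintro _ ⟨a, ha, rfl⟩ <;>
    rw [SetLike.mem_coe, mon_mem_span_mon_iff]
  · exact h ▸ subset_upperClosure ha
  · exact h.symm ▸ subset_upperClosure ha

theorem minimal_mem_upperClosure_iff {α : Type*} [PartialOrder α] {A : Set α} {x : α} :
    Minimal (· ∈ upperClosure A) x ↔ Minimal (· ∈ A) x := by
  refine ⟨fun h => ?_, fun h => ⟨subset_upperClosure h.prop, fun y ⟨a, ha, hay⟩ hyx => ?_⟩⟩
  · obtain ⟨a, ha, hax⟩ := h.prop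
    obtain rfl := h.eq_of_le (subset_upperClosure ha) hax
    exact ⟨ha, fun y hy hyx => h.le_of_le (subset_upperClosure hy) hyx⟩
  · exact (h.eq_of_le ha (hay.trans hyx)).ge.trans hay

theorem upperClosure_setOf_minimal {α : Type*} [PartialOrder α] [WellFoundedLT α] (A : Set α) :
    upperClosure {x | Minimal (· ∈ A) x} = upperClosure A := by
  ext x
  refine ⟨fun ⟨a, ha, hax⟩ => ⟨a, ha.prop, hax⟩, fun ⟨a, ha, hax⟩ => ?_⟩
  obtain ⟨b, hba, hb⟩ := exists_minimal_le_of_wellFoundedLT (· ∈ A) a ha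
  exact ⟨b, hb, hba.trans hax⟩

theorem minGens_span_mon (A : Set (Expo n)) :
    MinGens n K (Ideal.span (mon n K '' A)) = {x | Minimal (· ∈ A) x} := by
  ext s
  simp only [MinGens, mon_mem_span_mon_iff, Set.mem_ofPred_eq, ← minimal_mem_upperClosure_iff]
  exact ⟨fun h => ⟨h.1, fun t ht hts => (h.2 t ht hts).ge⟩,
    fun h => ⟨h.prop, fun t ht hts => h.eq_of_le ht hts⟩⟩

theorem colon_span_mon (A : Set (Expo n)) (f : Expo n) :
    Submodule.colon (Ideal.span (mon n K '' A)) (Ideal.span {mon n K f})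
      = Ideal.span (mon n K '' ((· - f) '' A)) := by
  classical
  have hsupp (p : MvPolynomial (Fin n) K) :
      (p * mon n K f).support = p.support.map (addRightEmbedding f) :=
    AddMonoidAlgebra.support_coeff_mul_single p 1 (by simp) f
  ext p
  rw [Ideal.mem_colon_span_singleton]
  simp only [show ∀ B : Set (Expo n), mon n K '' B = (fun s => monomial s (1 : K)) '' B from
    fun _ => rfl, mem_ideal_span_monomial_image, hsupp]
  simp [tsub_le_iff_right]

theorem span_mon_mul_span_mon (A B : Set (Expo n)) :
    Ideal.span (mon n K '' A) * Ideal.span (mon n K '' B)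
      = Ideal.span (mon n K '' Set.image2 (· + ·) A B) := by
  rw [Ideal.span_mul_span', Set.image_image2, ← Set.image2_mul, Set.image2_image_left,
    Set.image2_image_right]
  simp only [mon_add]

end MonomialIdeal

section Lambda

variable {n : ℕ}

noncomputable def lamSet (A : Set (Expo n)) : ℕ := ∑ᶠ w ∈ {x | Minimal (· ∈ A) x}, (w.degree - 1)

theorem lamOrd_eq_lamSet {K : Type} [Field K] {q : ℕ} {v : Fin q → Expo n} {i : Fin q}
    {A : Set (Expo n)} (h : colonPrev n K v i = Ideal.span (mon n K '' A)) :
    lamOrd n K v i = lamSet A := by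
  rw [lamOrd, h, minGens_span_mon]
  rfl

theorem exists_minimal_two_le_degree_of_lamSet_pos {A : Set (Expo n)} (h : 0 < lamSet A) :
    ∃ w, Minimal (· ∈ A) w ∧ 2 ≤ w.degree := by
  by_contra! hA
  exact h.ne' (finsum_mem_eq_zero_of_forall_eq_zero fun w hw => by have := hA w hw; omega)

theorem degree_le_one_of_lamSet_eq_zero {A : Set (Expo n)} (hA : A.Finite) (h : lamSet A = 0)
    {w : Expo n} (hw : Minimal (· ∈ A) w) : w.degree ≤ 1 := by
  have hmin : {x | Minimal (· ∈ A) x}.Finite := hA.subset fun _ hx => hx.prop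
  rw [lamSet, finsum_mem_eq_finite_toFinset_sum _ hmin, Finset.sum_eq_zero_iff] at h
  have := h w (hmin.mem_toFinset.mpr hw)
  omega

theorem genByVars_span_mon_of_lamSet_eq_zero {K : Type} [Field K] {A : Set (Expo n)}
    (hA : A.Finite) (h0 : 0 ∉ A) (h : lamSet A = 0) :
    genByVars n K (Ideal.span (mon n K '' A)) := by
  refine ⟨{k | Minimal (· ∈ A) (single k 1)}, ?_⟩
  have hvars : {x | Minimal (· ∈ A) x} = (single · 1) '' {k | Minimal (· ∈ A) (single k 1)} := by
    ext z
    refine ⟨fun hz => ?_, fun ⟨k, hk, hkz⟩ => hkz ▸ hk⟩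
    have hdeg : z.degree = 1 := by
      have := degree_le_one_of_lamSet_eq_zero hA h hz
      have : z.degree ≠ 0 := fun hz0 => h0 ((degree_eq_zero_iff z).mp hz0 ▸ hz.prop)
      omega
    obtain ⟨k, rfl⟩ : z ∈ Set.range (single · 1) := by rwa [range_single_one]
    exact ⟨k, hz, rfl⟩
  rw [← span_mon_eq_of_upperClosure_eq (upperClosure_setOf_minimal A), hvars, Set.image_image]
  rfl

end Lambda

section Comparison

variable {n : ℕ}

theorem injOn_tsub_single (T : Set (Expo n)) (j : Fin n) :
    {w | Minimal (· ∈ T) w}.InjOn (· - single j 1) := by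
  suffices ∀ w ∈ {w | Minimal (· ∈ T) w}, ∀ w' ∈ {w | Minimal (· ∈ T) w},
      w - single j 1 = w' - single j 1 → w j ≤ w' j → w = w' from
    fun w hw w' hw' h => (le_total (w j) (w' j)).elim (this w hw w' hw' h)
      fun hle => (this w' hw' w hw h.symm hle).symm
  intro w hw w' hw' h hj
  refine hw'.eq_of_le hw.prop fun k => ?_
  rcases eq_or_ne j k with rfl | hk
  · exact hj
  · exact (by simpa [single_apply, hk] using DFunLike.congr_fun h k : w k = w' k).le

variable {V T : Set (Expo n)} {j : Fin n}

theorem exists_minimal_tsub_single_eq (hV : ∀ v ∈ V, v.degree = 1) {z : Expo n}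
    (hz : Minimal (· ∈ V ∪ (· - single j 1) '' T) z) (h2 : 2 ≤ z.degree) :
    ∃ w, Minimal (· ∈ T) w ∧ w - single j 1 = z := by
  obtain hzV | ⟨w, hw, rfl⟩ := hz.prop
  · have := hV z hzV
    omega
  obtain ⟨w', hw'w, hw'⟩ := exists_minimal_le_of_wellFoundedLT (· ∈ T) w hw
  exact ⟨w', hw', hz.eq_of_le (Or.inr ⟨w', hw'.prop, rfl⟩) (tsub_le_tsub_right hw'w _)⟩

theorem lamSet_union_tsub_single_eq (hV : ∀ v ∈ V, v.degree = 1) :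
    lamSet (V ∪ (· - single j 1) '' T) =
      ∑ᶠ w ∈ {w | Minimal (· ∈ T) w ∧ Minimal (· ∈ V ∪ (· - single j 1) '' T) (w - single j 1)},
        ((w - single j 1).degree - 1) := by
  rw [lamSet, ← finsum_mem_image (f := fun z : Expo n => z.degree - 1)
    ((injOn_tsub_single T j).mono fun _ hw => hw.1)]
  refine finsum_mem_inter_support_eq _ _ _ (Set.ext fun z => ⟨fun ⟨hz, h2⟩ => ?_, ?_⟩)
  · obtain ⟨w, hw, rfl⟩ :=
      exists_minimal_tsub_single_eq hV hz (by simp only [Function.mem_support] at h2; omega)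
    exact ⟨⟨w, ⟨hw, hz⟩, rfl⟩, h2⟩
  · rintro ⟨⟨w, ⟨-, hw⟩, rfl⟩, h2⟩
    exact ⟨hw, h2⟩

theorem lamSet_union_tsub_single_le (hT : T.Finite) (hV : ∀ v ∈ V, v.degree = 1) :
    lamSet (V ∪ (· - single j 1) '' T) ≤ lamSet T := by
  have hmin : {w | Minimal (· ∈ T) w}.Finite := hT.subset fun _ hw => hw.prop
  have hB := hmin.subset (t := {w | Minimal (· ∈ T) w ∧
    Minimal (· ∈ V ∪ (· - single j 1) '' T) (w - single j 1)}) fun _ hw => hw.1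
  rw [lamSet_union_tsub_single_eq hV, lamSet, finsum_mem_eq_finite_toFinset_sum _ hB,
    finsum_mem_eq_finite_toFinset_sum _ hmin]
  calc _ ≤ ∑ w ∈ hB.toFinset, (w.degree - 1) :=
        Finset.sum_le_sum fun w _ => Nat.sub_le_sub_right (degree_mono tsub_le_self) 1
    _ ≤ _ := Finset.sum_le_sum_of_subset (Set.Finite.toFinset_subset_toFinset.mpr fun _ hw => hw.1)

theorem lamSet_union_tsub_single_lt (hT : T.Finite) (hV : ∀ v ∈ V, v.degree = 1) {w₀ : Expo n}
    (hw₀ : Minimal (· ∈ T) w₀) (h2 : 2 ≤ w₀.degree)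
    (hj : w₀ j = 0 → ¬ Minimal (· ∈ V ∪ (· - single j 1) '' T) w₀) :
    lamSet (V ∪ (· - single j 1) '' T) < lamSet T := by
  have hmin : {w | Minimal (· ∈ T) w}.Finite := hT.subset fun _ hw => hw.prop
  have hB := hmin.subset (t := {w | Minimal (· ∈ T) w ∧
    Minimal (· ∈ V ∪ (· - single j 1) '' T) (w - single j 1)}) fun _ hw => hw.1
  have hsub : hB.toFinset ⊆ hmin.toFinset :=
    Set.Finite.toFinset_subset_toFinset.mpr fun _ hw => hw.1
  have hle : ∀ w ∈ hB.toFinset, (w - single j 1).degree - 1 ≤ w.degree - 1 :=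
    fun w _ => Nat.sub_le_sub_right (degree_mono tsub_le_self) 1
  rw [lamSet_union_tsub_single_eq hV, lamSet, finsum_mem_eq_finite_toFinset_sum _ hB,
    finsum_mem_eq_finite_toFinset_sum _ hmin]
  by_cases hw₀B : w₀ ∈ hB.toFinset
  · have hw₀j : w₀ j ≠ 0 := fun h0 =>
      hj h0 (tsub_single_eq_self h0 ▸ (hB.mem_toFinset.mp hw₀B).2)
    have := degree_tsub_single_add_one hw₀j
    calc _ < ∑ w ∈ hB.toFinset, (w.degree - 1) :=
          Finset.sum_lt_sum hle ⟨w₀, hw₀B, by omega⟩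
      _ ≤ _ := Finset.sum_le_sum_of_subset hsub
  · calc _ ≤ ∑ w ∈ hB.toFinset, (w.degree - 1) := Finset.sum_le_sum hle
      _ < _ := Finset.sum_lt_sum_of_subset hsub (hmin.mem_toFinset.mpr hw₀) hw₀B (by omega)
          fun _ _ _ => Nat.zero_le _

end Comparison

theorem Set.Finite.exists_enum_strictMono {α β : Type*} [LinearOrder β] {X : Set α}
    (hX : X.Finite) {κ : α → β} (hκ : X.InjOn κ) :
    ∃ (m : ℕ) (g : Fin m → α), Set.range g = X ∧ StrictMono (κ ∘ g) := by
  classical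
  let F := hX.toFinset.image κ
  have hF : ∀ b : F, ∃ a ∈ X, κ a = b := fun b => by
    obtain ⟨a, ha, hab⟩ := Finset.mem_image.mp b.2
    exact ⟨a, hX.mem_toFinset.mp ha, hab⟩
  choose a haX hκa using hF
  let e := F.orderIsoOfFin rfl
  refine ⟨F.card, fun t => a (e t), Set.ext fun x => ⟨?_, fun hx => ?_⟩, fun s t hst => ?_⟩
  · rintro ⟨t, rfl⟩
    exact haX _
  · let b : F := ⟨κ x, Finset.mem_image_of_mem κ (hX.mem_toFinset.mpr hx)⟩
    refine ⟨e.symm b, hκ (haX _) hx ?_⟩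
    rw [e.apply_symm_apply, hκa]
  · simp only [Function.comp_apply, hκa]
    exact e.strictMono hst

theorem StrictMono.image_setOf_lt_eq {α β : Type*} [Preorder β] {m : ℕ} {g : Fin m → α}
    {κ : α → β} (hκ : StrictMono (κ ∘ g)) (t : Fin m) :
    g '' {s | s < t} = {x | x ∈ Set.range g ∧ κ x < κ (g t)} := by
  ext x
  constructor
  · rintro ⟨s, hs, rfl⟩
    exact ⟨⟨s, rfl⟩, hκ hs⟩
  · rintro ⟨⟨s, rfl⟩, hs⟩
    exact ⟨s, hκ.lt_iff_lt.mp hs, rfl⟩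

section GeneratorOrder

variable {n r : ℕ}

abbrev PairKey (n r : ℕ) := Lex (Fin r × Lex (Bool × Fin n))

/-- The pair `(i, j)` stands for `u i + x_j`. Pairs are compared by `i` first; within a block,
the variables dividing `w₀ i` come first. -/
def pairKey (w₀ : Fin r → Expo n) (p : Fin r × Fin n) : PairKey n r :=
  toLex (p.1, toLex (decide (w₀ p.1 p.2 = 0), p.2))

variable {w₀ : Fin r → Expo n}

theorem pairKey_injective (w₀ : Fin r → Expo n) : Function.Injective (pairKey w₀) :=
  fun _ _ h => Prod.ext (congrArg (fun k => (ofLex k).1) h)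
    (congrArg (fun k => (ofLex (ofLex k).2).2) h)

theorem pairKey_lt_of_fst_lt {p q : Fin r × Fin n} (h : p.1 < q.1) :
    pairKey w₀ p < pairKey w₀ q :=
  Prod.Lex.toLex_lt_toLex.mpr (Or.inl h)

theorem fst_le_of_pairKey_le {p q : Fin r × Fin n} (h : pairKey w₀ p ≤ pairKey w₀ q) :
    p.1 ≤ q.1 :=
  Prod.Lex.monotone_fst_ofLex (β := Lex (Bool × Fin n)) h

theorem pairKey_lt_of_apply_ne_zero {i : Fin r} {k j : Fin n} (hk : w₀ i k ≠ 0)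
    (hj : w₀ i j = 0) : pairKey w₀ (i, k) < pairKey w₀ (i, j) :=
  Prod.Lex.toLex_lt_toLex.mpr
    (Or.inr ⟨rfl, Prod.Lex.toLex_lt_toLex.mpr (Or.inl (by simp [hk, hj]))⟩)

def varMultiples (u : Fin r → Expo n) : Set (Expo n) :=
  Set.range fun p : Fin r × Fin n => u p.1 + single p.2 1

/-- The least key of a way of writing `x` as `u i + x_j` (`⊤` if there is none). -/
noncomputable def minKey (u w₀ : Fin r → Expo n) (x : Expo n) : WithTop (PairKey n r) :=
  ((Finset.univ.filter fun p : Fin r × Fin n => u p.1 + single p.2 1 = x).image (pairKey w₀)).min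

variable {u : Fin r → Expo n}

theorem minKey_le (p : Fin r × Fin n) : minKey u w₀ (u p.1 + single p.2 1) ≤ pairKey w₀ p :=
  Finset.min_le (Finset.mem_image_of_mem _ (by simp))

theorem exists_minKey_eq {x : Expo n} (hx : x ∈ varMultiples u) :
    ∃ p : Fin r × Fin n, u p.1 + single p.2 1 = x ∧ minKey u w₀ x = pairKey w₀ p := by
  obtain ⟨p, hp⟩ := hx
  obtain ⟨k, hk⟩ := Finset.min_of_mem (Finset.mem_image_of_mem (pairKey w₀)
    (Finset.mem_filter.mpr ⟨Finset.mem_univ p, hp⟩ :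
      p ∈ Finset.univ.filter fun q : Fin r × Fin n => u q.1 + single q.2 1 = x))
  obtain ⟨q, hq, rfl⟩ := Finset.mem_image.mp (Finset.mem_of_min hk)
  exact ⟨q, (Finset.mem_filter.mp hq).2, hk⟩

theorem injOn_minKey : (varMultiples u).InjOn (minKey u w₀) := by
  intro x hx y hy h
  obtain ⟨p, rfl, hp⟩ := exists_minKey_eq (w₀ := w₀) hx
  obtain ⟨q, rfl, hq⟩ := exists_minKey_eq (w₀ := w₀) hy
  rw [pairKey_injective w₀ (WithTop.coe_injective (hp.symm.trans (h.trans hq)))]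

end GeneratorOrder

section Colon

variable {n r : ℕ} {u w₀ : Fin r → Expo n}

def earlier (u w₀ : Fin r → Expo n) (f : Expo n) : Set (Expo n) :=
  {x | Minimal (· ∈ varMultiples u) x ∧ minKey u w₀ x < minKey u w₀ f}

def colonGens (u : Fin r → Expo n) (i : Fin r) : Set (Expo n) :=
  (fun l => u l - u i) '' {l | l < i}

def earlierVars (u w₀ : Fin r → Expo n) (i : Fin r) (j : Fin n) : Set (Expo n) :=
  (single · 1) '' {k | u i + single k 1 ∈ earlier u w₀ (u i + single j 1)}

theorem colonPrev_eq_span_colonGens (K : Type) [Field K] (u : Fin r → Expo n) (i : Fin r) :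
    colonPrev n K u i = Ideal.span (mon n K '' colonGens u i) := by
  rw [colonPrev, colon_span_mon, colonGens, Set.image_image, Set.image_image, Set.image_image]

theorem not_le_of_mem_earlier {f x : Expo n} (hf : Minimal (· ∈ varMultiples u) f)
    (hx : x ∈ earlier u w₀ f) : ¬ x ≤ f :=
  fun h => (hf.eq_of_le hx.1.prop h ▸ hx.2).false

variable (hmono : Monotone fun i => (u i).degree)
include hmono

theorem minKey_lt_of_lt_add_single {x : Expo n} (hx : x ∈ varMultiples u) {l i : Fin r}
    {k j : Fin n} (hlt : x < u l + single k 1) (hl : l ≤ i) :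
    minKey u w₀ x < pairKey w₀ (i, j) := by
  obtain ⟨p, rfl, hp⟩ := exists_minKey_eq (w₀ := w₀) hx
  rw [hp, WithTop.coe_lt_coe]
  refine pairKey_lt_of_fst_lt (hmono.reflect_lt ?_)
  have := degree_lt_degree hlt
  have := hmono hl
  simp only [map_add, degree_single] at *
  omega

theorem minKey_lt_of_le_add_single {x : Expo n} (hx : x ∈ varMultiples u) {l i : Fin r}
    {k j : Fin n} (hle : x ≤ u l + single k 1) (hl : l < i) :
    minKey u w₀ x < pairKey w₀ (i, j) := by
  obtain hlt | rfl := hle.lt_or_eq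
  · exact minKey_lt_of_lt_add_single hmono hx hlt hl.le
  · exact (minKey_le (l, k)).trans_lt (WithTop.coe_lt_coe.mpr (pairKey_lt_of_fst_lt hl))

omit hmono in
theorem exists_le_tsub_of_mem_earlier {i : Fin r} {j : Fin n}
    (hkey : minKey u w₀ (u i + single j 1) = pairKey w₀ (i, j)) {x : Expo n}
    (hx : x ∈ earlier u w₀ (u i + single j 1)) :
    ∃ z ∈ earlierVars u w₀ i j ∪ (· - single j 1) '' colonGens u i,
      z ≤ x - (u i + single j 1) := by
  obtain ⟨⟨i', j'⟩, rfl, hp⟩ := exists_minKey_eq (w₀ := w₀) hx.1.prop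
  have hx2 := hx.2
  rw [hp, hkey, WithTop.coe_lt_coe] at hx2
  obtain hlt | rfl := (fst_le_of_pairKey_le hx2.le).lt_or_eq
  · exact ⟨u i' - (u i + single j 1), Or.inr ⟨u i' - u i, ⟨i', hlt, rfl⟩, tsub_tsub _ _ _⟩,
      tsub_le_tsub_right le_self_add _⟩
  · have hj : j' ≠ j := by
      rintro rfl
      exact hx.2.false
    exact ⟨single j' 1, Or.inl ⟨j', hx, rfl⟩, (add_single_tsub_add_single _ hj).ge⟩

theorem exists_mem_earlier_tsub_le {i : Fin r} {j : Fin n}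
    (hkey : minKey u w₀ (u i + single j 1) = pairKey w₀ (i, j)) {z : Expo n}
    (hz : z ∈ earlierVars u w₀ i j ∪ (· - single j 1) '' colonGens u i) :
    ∃ x ∈ earlier u w₀ (u i + single j 1), x - (u i + single j 1) ≤ z := by
  rcases hz with ⟨k, hk, rfl⟩ | ⟨_, ⟨l, hl, rfl⟩, rfl⟩
  · have hkj : k ≠ j := by
      rintro rfl
      exact hk.2.false
    exact ⟨_, hk, (add_single_tsub_add_single _ hkj).le⟩
  -- `x_j u_i` does not divide `u_l`, for degree reasons
  obtain ⟨k, hk⟩ : ∃ k, u l k < (u i + single j 1 : Expo n) k := by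
    by_contra! h
    have := degree_mono (show u i + single j 1 ≤ u l from h)
    have := hmono (le_of_lt hl)
    simp only [map_add, degree_single] at *
    omega
  obtain ⟨x, hxle, hx⟩ :=
    exists_minimal_le_of_wellFoundedLT (· ∈ varMultiples u) (u l + single k 1) ⟨(l, k), rfl⟩
  refine ⟨x, ⟨hx, hkey ▸ minKey_lt_of_le_add_single hmono hx.prop hxle hl⟩, ?_⟩
  simp only [tsub_tsub]
  exact (tsub_le_tsub_right hxle _).trans (add_single_tsub_le hk)

theorem upperClosure_image_tsub_earlier {i : Fin r} {j : Fin n}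
    (hkey : minKey u w₀ (u i + single j 1) = pairKey w₀ (i, j)) :
    upperClosure ((· - (u i + single j 1)) '' earlier u w₀ (u i + single j 1)) =
      upperClosure (earlierVars u w₀ i j ∪ (· - single j 1) '' colonGens u i) := by
  ext y
  simp only [SetLike.mem_coe, mem_upperClosure, Set.exists_mem_image]
  constructor
  · rintro ⟨x, hx, hxy⟩
    obtain ⟨z, hz, hzx⟩ := exists_le_tsub_of_mem_earlier hkey hx
    exact ⟨z, hz, hzx.trans hxy⟩
  · rintro ⟨z, hz, hzy⟩
    obtain ⟨x, hx, hxz⟩ := exists_mem_earlier_tsub_le hmono hkey hz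
    exact ⟨x, hx, hxz.trans hzy⟩

theorem not_minimal_of_apply_eq_zero {i : Fin r} {j : Fin n}
    (hkey : minKey u w₀ (u i + single j 1) = pairKey w₀ (i, j)) (h2 : 2 ≤ (w₀ i).degree)
    (hj : w₀ i j = 0) :
    ¬ Minimal (· ∈ earlierVars u w₀ i j ∪ (· - single j 1) '' colonGens u i) (w₀ i) := by
  intro hmin
  obtain ⟨k, hk⟩ : ∃ k, w₀ i k ≠ 0 := by
    by_contra! h
    simp [show w₀ i = 0 from Finsupp.ext h] at h2
  have hkj : k ≠ j := fun h => hk (h ▸ hj)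
  -- `x_k u_i` or one of its divisors in `G(mI)` precedes `f`, so `x_k` is in the colon ideal
  obtain ⟨x, hxle, hx⟩ :=
    exists_minimal_le_of_wellFoundedLT (· ∈ varMultiples u) (u i + single k 1) ⟨(i, k), rfl⟩
  have hxe : x ∈ earlier u w₀ (u i + single j 1) := by
    refine ⟨hx, hkey ▸ ?_⟩
    obtain hlt | rfl := hxle.lt_or_eq
    · exact minKey_lt_of_lt_add_single hmono hx.prop hlt le_rfl
    · exact (minKey_le (i, k)).trans_lt
        (WithTop.coe_lt_coe.mpr (pairKey_lt_of_apply_ne_zero hk hj))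
  obtain ⟨z, hz, hzx⟩ := exists_le_tsub_of_mem_earlier hkey hxe
  have hzk : z ≤ single k 1 :=
    hzx.trans ((tsub_le_tsub_right hxle _).trans (add_single_tsub_add_single _ hkj).le)
  have := degree_mono (hmin.eq_of_le hz (hzk.trans (single_le_iff.mpr (by omega))) ▸ hzk)
  simp only [degree_single] at this
  omega

end Colon

section MaxIdealMul

variable {n r : ℕ} {K : Type} [Field K]

theorem maxIdeal_eq_span_mon :
    maxIdeal n K = Ideal.span (mon n K '' Set.range (single · 1)) := by
  rw [maxIdeal, ← Set.range_comp]
  rfl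

theorem eq_span_mon_range {I : Ideal (MvPolynomial (Fin n) K)} (hI : IsMonomialIdeal n K I)
    {u : Fin r → Expo n} (hrange : Set.range u = MinGens n K I) :
    I = Ideal.span (mon n K '' Set.range u) := by
  obtain ⟨A, rfl⟩ := hI
  rw [hrange, minGens_span_mon]
  exact (span_mon_eq_of_upperClosure_eq (upperClosure_setOf_minimal A)).symm

theorem minGens_maxIdeal_mul {I : Ideal (MvPolynomial (Fin n) K)} (hI : IsMonomialIdeal n K I)
    {u : Fin r → Expo n} (hrange : Set.range u = MinGens n K I) :
    MinGens n K (maxIdeal n K * I) = {x | Minimal (· ∈ varMultiples u) x} := by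
  rw [mul_comm, eq_span_mon_range hI hrange, maxIdeal_eq_span_mon, span_mon_mul_span_mon,
    Set.image2_range, minGens_span_mon]
  rfl

end MaxIdealMul

section Enumeration

variable {n r m : ℕ} {K : Type} [Field K] {u w₀ : Fin r → Expo n} {g : Fin m → Expo n}
  (hg : Set.range g = {x | Minimal (· ∈ varMultiples u) x})
  (hκ : StrictMono (minKey u w₀ ∘ g))
include hg hκ

omit hκ in
theorem minimal_varMultiples_of_range_eq (t : Fin m) : Minimal (· ∈ varMultiples u) (g t) := by
  have := Set.mem_range_self (f := g) t
  rwa [hg] at this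

theorem colonPrev_eq_span_image_tsub_earlier (t : Fin m) :
    colonPrev n K g t = Ideal.span (mon n K '' ((· - g t) '' earlier u w₀ (g t))) := by
  rw [colonPrev, colon_span_mon, hκ.image_setOf_lt_eq, hg]
  rfl

theorem exists_lamOrd_le (hmono : Monotone fun i => (u i).degree)
    (hw₀ : ∀ i, 0 < lamSet (colonGens u i) →
      Minimal (· ∈ colonGens u i) (w₀ i) ∧ 2 ≤ (w₀ i).degree) (t : Fin m) :
    ∃ (i : Fin r) (j : Fin n), g t = u i + single j 1 ∧
      lamOrd n K g t ≤ lamOrd n K u i ∧ (0 < lamOrd n K u i → lamOrd n K g t < lamOrd n K u i) := by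
  obtain ⟨⟨i, j⟩, hij, hkey⟩ :=
    exists_minKey_eq (w₀ := w₀) (minimal_varMultiples_of_range_eq hg t).prop
  rw [← hij] at hkey
  have hcolon : colonPrev n K g t =
      Ideal.span (mon n K '' (earlierVars u w₀ i j ∪ (· - single j 1) '' colonGens u i)) := by
    rw [colonPrev_eq_span_image_tsub_earlier hg hκ, ← hij]
    exact span_mon_eq_of_upperClosure_eq (upperClosure_image_tsub_earlier hmono hkey)
  have hV : ∀ v ∈ earlierVars u w₀ i j, v.degree = 1 := by
    rintro _ ⟨k, -, rfl⟩
    exact degree_single k 1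
  have hfin : (colonGens u i).Finite := (Set.toFinite _).image _
  refine ⟨i, j, hij.symm, ?_⟩
  rw [lamOrd_eq_lamSet hcolon, lamOrd_eq_lamSet (colonPrev_eq_span_colonGens K u i)]
  refine ⟨lamSet_union_tsub_single_le hfin hV, fun hpos => ?_⟩
  obtain ⟨hmin, h2⟩ := hw₀ i hpos
  exact lamSet_union_tsub_single_lt hfin hV hmin h2 (not_minimal_of_apply_eq_zero hmono hkey h2)

theorem genByVars_colonPrev_of_lamOrd_eq_zero (t : Fin m) (h : lamOrd n K g t = 0) :
    genByVars n K (colonPrev n K g t) := by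
  have hcolon := colonPrev_eq_span_image_tsub_earlier (K := K) hg hκ t
  rw [hcolon]
  refine genByVars_span_mon_of_lamSet_eq_zero
    (((Set.finite_range _).subset fun _ hx => hx.1.prop).image _) ?_
    ((lamOrd_eq_lamSet hcolon).symm.trans h)
  rintro ⟨x, hx, hx0⟩
  exact not_le_of_mem_earlier (minimal_varMultiples_of_range_eq hg t) hx
    (tsub_eq_zero_iff_le.mp hx0)

end Enumeration

theorem lambda_decreases_for_mI_general (n : ℕ) (K : Type) [Field K]
    (I : Ideal (MvPolynomial (Fin n) K)) (hI : IsMonomialIdeal n K I)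
    (r : ℕ) (u : Fin r → Expo n)
    (hrange : Set.range u = MinGens n K I) (hdeg : DegIncr u) :
    ∃ (m : ℕ) (g : Fin m → Expo n), Function.Injective g ∧
      Set.range g = MinGens n K (maxIdeal n K * I) ∧
      (∀ t : Fin m, ∃ (i : Fin r) (j : Fin n),
        g t = u i + Finsupp.single j 1 ∧
        lamOrd n K g t ≤ lamOrd n K u i ∧
        (0 < lamOrd n K u i → lamOrd n K g t < lamOrd n K u i)) ∧
      ((∀ i : Fin r, lamOrd n K u i = 0) →
        ∀ t : Fin m, genByVars n K (colonPrev n K g t)) := by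
  have hheavy (i : Fin r) : ∃ w, 0 < lamSet (colonGens u i) →
      Minimal (· ∈ colonGens u i) w ∧ 2 ≤ w.degree := by
    by_cases hpos : 0 < lamSet (colonGens u i)
    · obtain ⟨w, hw⟩ := exists_minimal_two_le_degree_of_lamSet_pos hpos
      exact ⟨w, fun _ => hw⟩
    · exact ⟨0, fun h => absurd h hpos⟩
  choose w₀ hw₀ using hheavy
  have hfin : {x | Minimal (· ∈ varMultiples u) x}.Finite :=
    (Set.finite_range _).subset fun _ hx => hx.prop
  obtain ⟨m, g, hg, hκ⟩ :=
    hfin.exists_enum_strictMono (injOn_minKey (w₀ := w₀).mono fun _ hx => hx.prop)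
  have hle := exists_lamOrd_le (K := K) hg hκ hdeg.monotone hw₀
  refine ⟨m, g, hκ.injective.of_comp, hg.trans (minGens_maxIdeal_mul hI hrange).symm, hle,
    fun h0 t => genByVars_colonPrev_of_lamOrd_eq_zero hg hκ t ?_⟩
  obtain ⟨i, -, -, hti, -⟩ := hle t
  exact Nat.eq_zero_of_le_zero (h0 i ▸ hti)

/-- **(Ficarra–Herzog–Moradi, proof of Theorem 1.5).** Let `I` be a monomial ideal and
`O : u_1 < ⋯ < u_r` a degree-increasing order on `G(I)`. Then there is an order `O_1`
on the minimal monomial generators of `mI`, each of which is of the form `x_j u_i`,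
such that for every `f = x_j u_i ∈ G(mI)`: `λ_{mI,O_1,f} ≤ λ_{I,O,u_i}`, and if
`λ_{I,O,u_i} > 0` then `λ_{mI,O_1,f} < λ_{I,O,u_i}`. In particular, if `I` has linear
quotients with respect to `O`, then `mI` has linear quotients with respect to `O_1`. -/
theorem lambda_decreases_for_mI (n : ℕ) (K : Type) [Field K]
    (I : Ideal (MvPolynomial (Fin n) K)) (hI : IsMonomialIdeal n K I)
    (r : ℕ) (u : Fin r → Expo n) (hinj : Function.Injective u)
    (hrange : Set.range u = MinGens n K I) (hdeg : DegIncr u) :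
    ∃ (m : ℕ) (g : Fin m → Expo n), Function.Injective g ∧
      Set.range g = MinGens n K (maxIdeal n K * I) ∧
      (∀ t : Fin m, ∃ (i : Fin r) (j : Fin n),
        g t = u i + Finsupp.single j 1 ∧
        lamOrd n K g t ≤ lamOrd n K u i ∧
        (0 < lamOrd n K u i → lamOrd n K g t < lamOrd n K u i)) ∧
      ((∀ i : Fin r, lamOrd n K u i = 0) →
        ∀ t : Fin m, genByVars n K (colonPrev n K g t)) :=
  lambda_decreases_for_mI_general n K I hI r u hrange hdeg
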